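/- arXiv:2008.01509 — 3 statements merged into one kernel-verified Lean document; each statement's English description precedes it below -/
import Mathlib

section
/- Suppose (q_p)_{p∈ℕ} and (u_p)_{p∈ℕ} are sequences of smooth real-valued functions on ℝ satisfying q_p' = q_{p+1} - q_0 u_p and u_p' = -q_0 q_p for all p, and all q_p, u_p tend to 0 as s → +∞. Then for every n ∈ ℕ the quantity I_n(s) = u_{2n+1}(s) + (1/2) ∑_{k=0}^{2n} (-1)^{k+1} [u_k(s) u_{2n-k}(s) - q_k(s) q_{2n-k}(s)] is identically zero. -/
open Filter

theorem stmt1 (q u : ℕ → ℝ → ℝ)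
    (hsmooth : ∀ p, ContDiff ℝ (⊤ : ℕ∞) (q p) ∧ ContDiff ℝ (⊤ : ℕ∞) (u p))
    (hq : ∀ p s, deriv (q p) s = q (p + 1) s - q 0 s * u p s)
    (hu : ∀ p s, deriv (u p) s = -(q 0 s) * q p s)
    (hqlim : ∀ p, Tendsto (q p) atTop (nhds 0))
    (hulim : ∀ p, Tendsto (u p) atTop (nhds 0)) :
    ∀ (n : ℕ) (s : ℝ),
      u (2 * n + 1) s + (1 / 2) * ∑ k ∈ Finset.range (2 * n + 1),
        (-1 : ℝ) ^ (k + 1) * (u k s * u (2 * n - k) s - q k s * q (2 * n - k) s) = 0 := by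
  -- HasDerivAt versions of the hypotheses
  have hq' : ∀ p t, HasDerivAt (q p) (q (p + 1) t - q 0 t * u p t) t := by
    intro p t
    have h := ((hsmooth p).1.differentiable (by simp) t).hasDerivAt
    rwa [hq p t] at h
  have hu' : ∀ p t, HasDerivAt (u p) (-(q 0 t) * q p t) t := by
    intro p t
    have h := ((hsmooth p).2.differentiable (by simp) t).hasDerivAt
    rwa [hu p t] at h
  intro n s
  set m := 2 * n with hm
  set F : ℝ → ℝ := fun t =>
    u (m + 1) t + (1 / 2) * ∑ k ∈ Finset.range (m + 1),
      (-1 : ℝ) ^ (k + 1) * (u k t * u (m - k) t - q k t * q (m - k) t) with hF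
  -- F has derivative 0 everywhere
  have hder : ∀ t, HasDerivAt F 0 t := by
    intro t
    have hsum : HasDerivAt
        (fun t => ∑ k ∈ Finset.range (m + 1),
          (-1 : ℝ) ^ (k + 1) * (u k t * u (m - k) t - q k t * q (m - k) t))
        (∑ k ∈ Finset.range (m + 1),
          (-1 : ℝ) ^ (k + 1) *
            ((-(q 0 t) * q k t) * u (m - k) t + u k t * (-(q 0 t) * q (m - k) t)
              - ((q (k + 1) t - q 0 t * u k t) * q (m - k) t
                + q k t * (q (m - k + 1) t - q 0 t * u (m - k) t)))) t := by
      refine HasDerivAt.fun_sum fun k _ => ?_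
      exact (((hu' k t).mul (hu' (m - k) t)).sub ((hq' k t).mul (hq' (m - k) t))).const_mul _
    have hF' := (hu' (m + 1) t).fun_add (hsum.const_mul (1 / 2 : ℝ))
    -- simplify the summand
    have hsimp : (∑ k ∈ Finset.range (m + 1),
        (-1 : ℝ) ^ (k + 1) *
          ((-(q 0 t) * q k t) * u (m - k) t + u k t * (-(q 0 t) * q (m - k) t)
            - ((q (k + 1) t - q 0 t * u k t) * q (m - k) t
              + q k t * (q (m - k + 1) t - q 0 t * u (m - k) t))))
        = ∑ k ∈ Finset.range (m + 1),
            ((-1 : ℝ) ^ k * (q k t * q (m + 1 - k) t)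
              - (-1 : ℝ) ^ (k + 1) * (q (k + 1) t * q (m + 1 - (k + 1)) t)) := by
      refine Finset.sum_congr rfl fun k hk => ?_
      have hkm : k ≤ m := Nat.lt_succ_iff.mp (Finset.mem_range.mp hk)
      have h1 : m + 1 - k = m - k + 1 := by omega
      have h2 : m + 1 - (k + 1) = m - k := by omega
      rw [h1, h2]
      ring
    rw [hsimp, Finset.sum_range_sub' (fun k => (-1 : ℝ) ^ k * (q k t * q (m + 1 - k) t))] at hF'
    have hodd : Odd (m + 1) := by simp [hm, parity_simps]
    have hm1 : (-1 : ℝ) ^ (m + 1) = -1 := hodd.neg_one_pow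
    simp only [Nat.sub_self, pow_zero, Nat.sub_zero, one_mul, hm1] at hF'
    refine hF'.congr_deriv ?_
    ring
  -- F is constant; use the limit to conclude F s = 0
  have hdiffF : Differentiable ℝ F := fun t => (hder t).differentiableAt
  have hderiv0 : ∀ t, deriv F t = 0 := fun t => (hder t).deriv
  have hconst : ∀ t, F t = F s := fun t => is_const_of_deriv_eq_zero hdiffF hderiv0 t s
  have hlim : Tendsto F atTop (nhds 0) := by
    have h1 : Tendsto (fun t => u (m + 1) t) atTop (nhds 0) := hulim (m + 1)
    have h2 : Tendsto (fun t => ∑ k ∈ Finset.range (m + 1),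
        (-1 : ℝ) ^ (k + 1) * (u k t * u (m - k) t - q k t * q (m - k) t)) atTop
        (nhds (∑ k ∈ Finset.range (m + 1), (-1 : ℝ) ^ (k + 1) * ((0:ℝ) * 0 - 0 * 0))) := by
      refine tendsto_finset_sum _ fun k _ => Tendsto.const_mul _ ?_
      exact ((hulim k).mul (hulim (m - k))).sub ((hqlim k).mul (hqlim (m - k)))
    simp only [mul_zero, zero_mul, sub_zero, Finset.sum_const_zero] at h2
    have h0 : (0:ℝ) = 0 + 1 / 2 * 0 := by ring
    rw [hF, h0]
    exact h1.add (h2.const_mul _)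
  have hFconst : F = fun _ => F s := funext fun t => hconst t
  rw [hFconst] at hlim
  exact tendsto_nhds_unique tendsto_const_nhds hlim
end

section
/- Under the hierarchy relations q_p' = q_{p+1} - q_0 u_p and u_p' = -q_0 q_p, the derivative of the quantity I_n(s) = u_{2n+1} + (1/2) ∑_{k=0}^{2n} (-1)^{k+1} [u_k u_{2n-k} - q_k q_{2n-k}] vanishes identically (the sum telescopes to zero). -/
/-! Differentiating `u_k u_j - q_k q_j` along the hierarchy, the `q₀`-terms cancel and leave
`-(q_{k+1} q_j + q_k q_{j+1})`. In the alternating sum over `k + j = m` these are adjacent terms of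
the sequence `b_k = q_k q_{m+1-k}`, so the sum telescopes to
`b_0 + (-1)^m b_{m+1} = (1 + (-1)^m) q_0 q_{m+1}`.
For `m = 2n` half of this is `q_0 q_{2n+1}`, which cancels `u_{2n+1}' = -q_0 q_{2n+1}`. -/

open Finset

lemma sum_range_neg_one_pow_mul_add_succ {R : Type*} [CommRing R] (b : ℕ → R) (m : ℕ) :
    ∑ k ∈ range (m + 1), (-1 : R) ^ k * (b k + b (k + 1)) = b 0 + (-1 : R) ^ m * b (m + 1) := by
  induction m with
  | zero => simp
  | succ m ih => rw [sum_range_succ, ih]; ring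

section Hierarchy

variable {q u : ℕ → ℝ → ℝ} {s : ℝ}

lemma hasDerivAt_mul_sub_mul_of_hierarchy
    (hq : ∀ p, HasDerivAt (q p) (q (p + 1) s - q 0 s * u p s) s)
    (hu : ∀ p, HasDerivAt (u p) (-(q 0 s) * q p s) s) (k j : ℕ) :
    HasDerivAt (fun t => u k t * u j t - q k t * q j t)
      (-(q (k + 1) s * q j s + q k s * q (j + 1) s)) s := by
  refine (((hu k).mul (hu j)).sub ((hq k).mul (hq j))).congr_deriv ?_
  ring

lemma hasDerivAt_alternating_sum_of_hierarchy
    (hq : ∀ p, HasDerivAt (q p) (q (p + 1) s - q 0 s * u p s) s)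
    (hu : ∀ p, HasDerivAt (u p) (-(q 0 s) * q p s) s) (m : ℕ) :
    HasDerivAt (fun t => ∑ k ∈ range (m + 1),
        (-1 : ℝ) ^ (k + 1) * (u k t * u (m - k) t - q k t * q (m - k) t))
      ((1 + (-1 : ℝ) ^ m) * (q 0 s * q (m + 1) s)) s := by
  set b : ℕ → ℝ := fun k => q k s * q (m + 1 - k) s
  have hterm : ∀ k ∈ range (m + 1), HasDerivAt
      (fun t => (-1 : ℝ) ^ (k + 1) * (u k t * u (m - k) t - q k t * q (m - k) t))
      ((-1 : ℝ) ^ k * (b k + b (k + 1))) s := by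
    intro k hk
    have hkm : k ≤ m := Nat.lt_succ_iff.mp (mem_range.mp hk)
    refine ((hasDerivAt_mul_sub_mul_of_hierarchy hq hu k (m - k)).const_mul
      ((-1 : ℝ) ^ (k + 1))).congr_deriv ?_
    simp only [b, show m + 1 - k = m - k + 1 by omega, show m + 1 - (k + 1) = m - k by omega]
    ring
  refine (HasDerivAt.fun_sum hterm).congr_deriv ?_
  rw [sum_range_neg_one_pow_mul_add_succ]
  simp only [b, Nat.sub_zero, Nat.sub_self]
  ring

end Hierarchy

theorem stmt2 (q u : ℕ → ℝ → ℝ)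
    (hdiff : ∀ p, Differentiable ℝ (q p) ∧ Differentiable ℝ (u p))
    (hq : ∀ p s, deriv (q p) s = q (p + 1) s - q 0 s * u p s)
    (hu : ∀ p s, deriv (u p) s = -(q 0 s) * q p s) :
    ∀ (n : ℕ) (s : ℝ),
      deriv (fun t => u (2 * n + 1) t + (1 / 2) * ∑ k ∈ Finset.range (2 * n + 1),
        (-1 : ℝ) ^ (k + 1) * (u k t * u (2 * n - k) t - q k t * q (2 * n - k) t)) s = 0 := by
  intro n s
  have hq' : ∀ p, HasDerivAt (q p) (q (p + 1) s - q 0 s * u p s) s := fun p =>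
    hq p s ▸ ((hdiff p).1 s).hasDerivAt
  have hu' : ∀ p, HasDerivAt (u p) (-(q 0 s) * q p s) s := fun p =>
    hu p s ▸ ((hdiff p).2 s).hasDerivAt
  have hsum := (hasDerivAt_alternating_sum_of_hierarchy hq' hu' (2 * n)).const_mul (1 / 2 : ℝ)
  rw [((hu' (2 * n + 1)).fun_add hsum).deriv, pow_mul, neg_one_sq, one_pow]
  ring
end

section
/- Let B be a bounded skew-adjoint operator (B^T = −B) and D an operator with D^T = −D − |δ⟩⟨δ| such that I − 2DB and I + 2BD^T are invertible. Then the scalar Q = 2⟨δ, (I + 2BD^T)^{-1} B δ⟩ satisfies Q = −Q + Q²/(1+Q), hence Q ∈ {0, −2}; and along any continuous path t ↦ tB from 0 to B along which the relevant inverses exist, Q varies continuously from 0, forcing Q = 0. -/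
/-!
Put `c = 2t`, `A = 1 + c B Dᵀ`, `y = A⁻¹ B δ` and let `z` solve `Aᵀ z = δ`, so `Q = c ⟨δ, y⟩`
and `Aᵀ = 1 - c D B`. Since `Dᵀ = -D - |δ⟩⟨δ|`, `(1 - c B D) y = (1 + Q) B δ`, while
`(1 - c B D) B z = B (1 - c D B) z = B δ`. Invertibility of `1 - c B D`, which follows from that of
`Aᵀ` by Jacobson's lemma, gives `y = (1 + Q) B z`. Pairing with `δ` and using `Bᵀ = -B`,
`⟨δ, B z⟩ = -⟨A y, z⟩ = -⟨δ, y⟩`, hence `Q = -(1 + Q) Q`, i.e. `Q (Q + 2) = 0`. As `Q` is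
continuous on `[0, 1]` with `Q 0 = 0`, it cannot reach `-2`.
-/

open scoped InnerProductSpace
open ContinuousLinearMap

theorem isUnit_one_sub_mul_comm {R : Type*} [Ring R] {x y : R} (h : IsUnit (1 - x * y)) :
    IsUnit (1 - y * x) := by
  simpa [spectrum.notMem_iff] using
    (spectrum.unit_mem_mul_comm (R := ℤ) (a := x) (b := y) (r := 1)).not.mp
      (spectrum.notMem_iff.mpr (by simpa using h))

section

variable {H : Type*} [NormedAddCommGroup H] [InnerProductSpace ℝ H] [CompleteSpace H]
  {B D : H →L[ℝ] H} {δ : H}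

theorem adjoint_one_add_smul_comp_adjoint (hB : adjoint B = -B) (c : ℝ) :
    adjoint (1 + c • (B ∘L adjoint D)) = 1 - c • (D ∘L B) := by
  rw [map_add, map_smul, adjoint_comp, adjoint_adjoint, hB, ← star_eq_adjoint, star_one,
    comp_neg, smul_neg, ← sub_eq_add_neg]

theorem one_add_smul_comp_adjoint_apply (hD : adjoint D = -D - (innerSL ℝ δ).smulRight δ)
    (c : ℝ) (y : H) :
    (1 + c • (B ∘L adjoint D)) y = (1 - c • (B ∘L D)) y - (c * ⟪δ, y⟫_ℝ) • B δ := by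
  simp only [hD, add_apply, sub_apply, smul_apply, comp_apply, neg_apply,
    smulRight_apply, innerSL_apply_apply, map_sub, map_neg, map_smul, mul_smul]
  module

theorem inner_mul_add_two_eq_zero (hB : adjoint B = -B)
    (hD : adjoint D = -D - (innerSL ℝ δ).smulRight δ) {c : ℝ} {y z : H}
    (hM : Function.Injective ⇑((1 : H →L[ℝ] H) - c • (B ∘L D)))
    (hy : (1 + c • (B ∘L adjoint D)) y = B δ)
    (hz : (1 - c • (D ∘L B)) z = δ) :
    ⟪δ, y⟫_ℝ * (c * ⟪δ, y⟫_ℝ + 2) = 0 := by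
  have hMB : (1 - c • (B ∘L D)) ∘L B = B ∘L (1 - c • (D ∘L B)) := by
    ext x
    simp
  have hyz : y = (1 + c * ⟪δ, y⟫_ℝ) • B z := by
    apply hM
    rw [map_smul, ← comp_apply, hMB, comp_apply, hz,
      add_smul, one_smul, ← sub_eq_iff_eq_add, ← one_add_smul_comp_adjoint_apply hD, hy]
  have hBz : ⟪δ, B z⟫_ℝ = -⟪δ, y⟫_ℝ := calc
    ⟪δ, B z⟫_ℝ = -⟪B δ, z⟫_ℝ := by
      rw [← adjoint_inner_left, hB, neg_apply, inner_neg_left]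
    _ = -⟪y, δ⟫_ℝ := by
      rw [← hy, ← adjoint_inner_right, adjoint_one_add_smul_comp_adjoint hB, hz]
    _ = -⟪δ, y⟫_ℝ := by rw [real_inner_comm]
  have h := congrArg (⟪δ, ·⟫_ℝ) hyz
  simp only [inner_smul_right, hBz] at h
  linear_combination h

theorem mul_add_two_eq_zero_of_isUnit (hB : adjoint B = -B)
    (hD : adjoint D = -D - (innerSL ℝ δ).smulRight δ) {c q : ℝ}
    (hA : IsUnit (1 + c • (B ∘L adjoint D)))
    (hq : q = c * ⟪δ, Ring.inverse (1 + c • (B ∘L adjoint D)) (B δ)⟫_ℝ) :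
    q * (q + 2) = 0 := by
  have hN : IsUnit (1 - c • (D ∘L B)) := by
    simpa only [star_eq_adjoint, adjoint_one_add_smul_comp_adjoint hB] using hA.star
  have hM : IsUnit (1 - (c • B) * D) := isUnit_one_sub_mul_comm (by rwa [mul_def, comp_smul])
  rw [mul_def, smul_comp] at hM
  obtain ⟨z, hz⟩ := (isUnit_iff_bijective.mp hN).2 δ
  have hy : (1 + c • (B ∘L adjoint D)) (Ring.inverse (1 + c • (B ∘L adjoint D)) (B δ)) = B δ :=
    by simpa using congr($(Ring.mul_inverse_cancel _ hA) (B δ))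
  have hinner := inner_mul_add_two_eq_zero hB hD (isUnit_iff_bijective.mp hM).1 hy hz
  rw [hq]
  linear_combination c * hinner

end

theorem stmt15_general {H : Type*} [NormedAddCommGroup H] [InnerProductSpace ℝ H] [CompleteSpace H]
    (B D : H →L[ℝ] H) (δ : H)
    (hB : adjoint B = -B)
    (hD : adjoint D = -D - (innerSL ℝ δ).smulRight δ)
    (Qf : ℝ → ℝ)
    (hQf : ∀ t : ℝ, Qf t =
      2 * ⟪δ, (Ring.inverse ((1 : H →L[ℝ] H) + (2 * t) • (B ∘L adjoint D))) (t • B δ)⟫_ℝ)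
    (hu2 : ∀ t ∈ Set.Icc (0 : ℝ) 1, IsUnit ((1 : H →L[ℝ] H) + (2 * t) • (B ∘L adjoint D)))
    (hcont : ContinuousOn Qf (Set.Icc 0 1)) :
    (Qf 1 = -Qf 1 + (Qf 1) ^ 2 / (1 + Qf 1)) ∧ (Qf 1 = 0 ∨ Qf 1 = -2) ∧ Qf 1 = 0 := by
  have hdich : Set.MapsTo Qf (Set.Icc 0 1) {0, -2} := fun t ht => by
    have h := mul_add_two_eq_zero_of_isUnit (q := Qf t) hB hD (hu2 t ht) <| by
      rw [hQf t, map_smul, inner_smul_right]; ring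
    simpa [add_eq_zero_iff_eq_neg] using h
  have h0 : Qf 0 = 0 := by simp [hQf]
  have h1 : Qf 1 = 0 := h0 ▸ isPreconnected_Icc.constant_of_mapsTo (Set.toFinite _).isDiscrete
    hcont hdich (Set.right_mem_Icc.mpr zero_le_one) (Set.left_mem_Icc.mpr zero_le_one)
  exact ⟨by simp [h1], .inl h1, h1⟩

/-- Key step in the symplectic Pfaffian–determinant identity: the scalar
`Q(t) = 2⟨δ, (I + 2tB Dᵀ)⁻¹ (tB) δ⟩` satisfies the self-consistency equation
`Q = -Q + Q²/(1+Q)` at `t = 1`, hence `Q ∈ {0, -2}`, and by continuity along the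
path `t ↦ tB` starting from `Q(0) = 0` one gets `Q = 0`. -/
theorem stmt15 {H : Type*} [NormedAddCommGroup H] [InnerProductSpace ℝ H] [CompleteSpace H]
    (B D : H →L[ℝ] H) (δ : H)
    (hB : adjoint B = -B)
    (hD : adjoint D = -D - (innerSL ℝ δ).smulRight δ)
    (Qf : ℝ → ℝ)
    (hQf : ∀ t : ℝ, Qf t =
      2 * ⟪δ, (Ring.inverse ((1 : H →L[ℝ] H) + (2 * t) • (B ∘L adjoint D))) (t • B δ)⟫_ℝ)
    (hu1 : ∀ t ∈ Set.Icc (0 : ℝ) 1, IsUnit ((1 : H →L[ℝ] H) - (2 * t) • (D ∘L B)))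
    (hu2 : ∀ t ∈ Set.Icc (0 : ℝ) 1, IsUnit ((1 : H →L[ℝ] H) + (2 * t) • (B ∘L adjoint D)))
    (hcont : ContinuousOn Qf (Set.Icc 0 1)) :
    (Qf 1 = -Qf 1 + (Qf 1) ^ 2 / (1 + Qf 1)) ∧ (Qf 1 = 0 ∨ Qf 1 = -2) ∧ Qf 1 = 0 :=
  stmt15_general B D δ hB hD Qf hQf hu2 hcont
end
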